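/- arXiv:2502.00269 — 2 statements merged into one kernel-verified Lean document; each statement's English description precedes it below -/
import Mathlib

section
/- Abel's multinomial recurrence: for every m ≥ 1, every n ≥ 0, all positive reals x_1,…,x_m, and all integers p_1,…,p_m, one has A_n(x_1,…,x_m; p_1,…,p_m) = Σ_{s=0}^{n} C(n,s)·s!·(x_1+s)·A_{n-s}(x_1+s, x_2,…,x_m; p_1−1, p_2,…,p_m). -/
/-!
Splitting off the first coordinate writes `A_n(x; p)` as the binomial convolution
`Σ_{a+d=n} C(n,a) (x_1+a)^(a+p_1) B_d`, where `B_d` is the Abel sum of the remaining variables,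
and expands every `A_{n-s}` on the right in the same way. Grouping the right-hand side by
`a = s + c`, the coefficient of `B_d` becomes `C(n,a) (x_1+a)^(p_1-1)` times
`Σ_{s+c=a} a(a-1)⋯(a-s+1) (x_1+s) (x_1+a)^c`, and this one-variable Abel sum telescopes to
`(x_1+a)^(a+1)`.
-/

/-- The Abel sum `A_n(x_1,…,x_m; p_1,…,p_m)`: the sum over tuples `s` of nonnegative
integers with `s_1 + ⋯ + s_m = n` of the multinomial coefficient `n!/(s_1!⋯s_m!)`
times `∏_j (x_j + s_j)^(s_j + p_j)`, powers taken in `ℝ` (`zpow`). -/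
noncomputable def abelA (m n : ℕ) (x : Fin m → ℝ) (p : Fin m → ℤ) : ℝ :=
  ∑ s ∈ Finset.Nat.antidiagonalTuple m n,
    (Nat.multinomial Finset.univ s : ℝ) * ∏ j, (x j + s j) ^ ((s j : ℤ) + p j)

open Finset
open scoped Nat

theorem Nat.choose_mul_factorial_mul_choose (n s c : ℕ) :
    n.choose s * s ! * (n - s).choose c = n.choose (s + c) * (s + c).descFactorial s := by
  rw [Nat.descFactorial_eq_factorial_mul_choose, mul_left_comm, mul_assoc,
    Nat.choose_mul (Nat.le_add_right s c), Nat.add_sub_cancel_left]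
  ring

theorem Nat.multinomial_univ_fin_cons {m : ℕ} (a : ℕ) (t : Fin m → ℕ) :
    Nat.multinomial univ (Fin.cons a t : Fin (m + 1) → ℕ) =
      (a + ∑ i, t i).choose a * Nat.multinomial univ t := by
  rw [Fin.univ_succ, Nat.multinomial_cons]
  simp [Nat.multinomial, Finset.sum_map, Finset.prod_map]

theorem Finset.Nat.sum_antidiagonalTuple_succ {M : Type*} [AddCommMonoid M] (m n : ℕ)
    (f : (Fin (m + 1) → ℕ) → M) :
    ∑ s ∈ antidiagonalTuple (m + 1) n, f s =
      ∑ ab ∈ antidiagonal n, ∑ t ∈ antidiagonalTuple m ab.2, f (Fin.cons ab.1 t) := by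
  rw [Finset.sum_sigma']
  refine Finset.sum_nbij' (fun s => ⟨(s 0, n - s 0), Fin.tail s⟩)
    (fun z => Fin.cons z.1.1 z.2) ?_ ?_ ?_ ?_ ?_ <;>
    simp +contextual only [mem_sigma, HasAntidiagonal.mem_antidiagonal, mem_antidiagonalTuple,
      Fin.sum_univ_succ, Fin.cons_zero, Fin.cons_succ, Fin.tail_cons, Fin.cons_self_tail, Fin.tail,
      implies_true, and_imp]
  · omega
  · rintro ⟨⟨a, b⟩, t⟩ hab -
    dsimp only at hab
    simp only [Sigma.mk.injEq, Prod.mk.injEq, heq_eq_eq, true_and, and_true]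
    omega

theorem sum_antidiagonal_antidiagonal_assoc {M : Type*} [AddCommMonoid M] (n : ℕ)
    (f : ℕ → ℕ → ℕ → M) :
    ∑ sr ∈ antidiagonal n, ∑ cd ∈ antidiagonal sr.2, f sr.1 cd.1 cd.2 =
      ∑ ad ∈ antidiagonal n, ∑ sc ∈ antidiagonal ad.1, f sc.1 sc.2 ad.2 := by
  rw [Finset.sum_sigma', Finset.sum_sigma']
  refine Finset.sum_nbij' (fun z => ⟨(z.1.1 + z.2.1, z.2.2), (z.1.1, z.2.1)⟩)
    (fun z => ⟨(z.2.1, z.2.2 + z.1.2), (z.2.2, z.1.2)⟩) ?_ ?_ ?_ ?_ ?_ <;>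
    simp +contextual only [mem_sigma, HasAntidiagonal.mem_antidiagonal, Prod.mk.eta, Sigma.eta,
      implies_true, and_imp, and_true]
  all_goals omega

theorem sum_antidiagonal_descFactorial_mul_pow {R : Type*} [CommRing R] (y : R) (a : ℕ) :
    ∑ sc ∈ antidiagonal a, (a.descFactorial sc.1 : R) * (y + sc.1) * (y + a) ^ sc.2 =
      (y + a) ^ (a + 1) := by
  set G : ℕ → R := fun s => a.descFactorial s * (y + a) ^ (a + 1 - s)
  have hG : ∀ s ∈ range (a + 1),
      (a.descFactorial s : R) * (y + s) * (y + a) ^ (a - s) = G s - G (s + 1) := by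
    intro s hs
    have hsa : s ≤ a := Nat.lt_succ_iff.mp (mem_range.mp hs)
    simp only [G, Nat.descFactorial_succ, Nat.cast_mul, Nat.cast_sub hsa,
      show a + 1 - s = a - s + 1 by omega, show a + 1 - (s + 1) = a - s by omega, pow_succ]
    ring
  rw [Nat.sum_antidiagonal_eq_sum_range_succ_mk, sum_congr rfl hG, sum_range_sub']
  simp [G]

theorem sum_antidiagonal_choose_factorial_choose_zpow {K : Type*} [Field K] (y : K) (q : ℤ)
    (n : ℕ) {a : ℕ} (hy : y + a ≠ 0) :
    ∑ sc ∈ antidiagonal a, (n.choose sc.1 : K) * sc.1 ! * (y + sc.1) *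
        ((n - sc.1).choose sc.2 * (y + sc.1 + sc.2) ^ ((sc.2 : ℤ) + (q - 1))) =
      n.choose a * (y + a) ^ ((a : ℤ) + q) := by
  have hterm : ∀ sc ∈ antidiagonal a,
      (n.choose sc.1 : K) * sc.1 ! * (y + sc.1) *
        ((n - sc.1).choose sc.2 * (y + sc.1 + sc.2) ^ ((sc.2 : ℤ) + (q - 1))) =
      n.choose a * (y + a) ^ (q - 1) *
        ((a.descFactorial sc.1 : K) * (y + sc.1) * (y + a) ^ sc.2) := by
    rintro ⟨s, c⟩ hsc
    rw [HasAntidiagonal.mem_antidiagonal] at hsc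
    subst hsc
    have hcoeff : (n.choose s : K) * s ! * (n - s).choose c =
        n.choose (s + c) * (s + c).descFactorial s := by
      exact_mod_cast congrArg (Nat.cast (R := K)) (Nat.choose_mul_factorial_mul_choose n s c)
    rw [Nat.cast_add, ← add_assoc] at hy ⊢
    rw [zpow_add₀ hy, zpow_natCast]
    linear_combination (y + s) * (y + s + c) ^ c * (y + s + c) ^ (q - 1) * hcoeff
  rw [sum_congr rfl hterm, ← mul_sum, sum_antidiagonal_descFactorial_mul_pow, mul_assoc,
    ← zpow_natCast, ← zpow_add₀ hy]
  congr 2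
  push_cast
  ring

theorem abel_convolution_recurrence {K : Type*} [Field K] (y : K) (q : ℤ) (B : ℕ → K)
    (n : ℕ) (hy : ∀ a ≤ n, y + a ≠ 0) :
    ∑ ad ∈ antidiagonal n, (n.choose ad.1 : K) * (y + ad.1) ^ ((ad.1 : ℤ) + q) * B ad.2 =
      ∑ s ∈ range (n + 1), (n.choose s : K) * s ! * (y + s) *
        ∑ cd ∈ antidiagonal (n - s),
          (n - s).choose cd.1 * (y + s + cd.1) ^ ((cd.1 : ℤ) + (q - 1)) * B cd.2 := by
  rw [← Nat.sum_antidiagonal_eq_sum_range_succ (fun s r => (n.choose s : K) * s ! * (y + s) *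
        ∑ cd ∈ antidiagonal r,
          ((n - s).choose cd.1 * (y + s + cd.1) ^ ((cd.1 : ℤ) + (q - 1)) * B cd.2))]
  simp_rw [mul_sum]
  rw [sum_antidiagonal_antidiagonal_assoc n (fun s c d => (n.choose s : K) * s ! * (y + s) *
    ((n - s).choose c * (y + s + c) ^ ((c : ℤ) + (q - 1)) * B d))]
  refine sum_congr rfl fun ad had => ?_
  rw [HasAntidiagonal.mem_antidiagonal] at had
  simp_rw [← mul_assoc _ _ (B ad.2)]
  rw [← sum_mul, sum_antidiagonal_choose_factorial_choose_zpow y q n (hy ad.1 (by omega))]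

theorem abelA_succ (m n : ℕ) (x : Fin (m + 1) → ℝ) (p : Fin (m + 1) → ℤ) :
    abelA (m + 1) n x p = ∑ ab ∈ antidiagonal n, (n.choose ab.1 : ℝ) *
      (x 0 + ab.1) ^ ((ab.1 : ℤ) + p 0) * abelA m ab.2 (Fin.tail x) (Fin.tail p) := by
  rw [abelA, Finset.Nat.sum_antidiagonalTuple_succ]
  refine sum_congr rfl fun ab hab => ?_
  rw [abelA, mul_sum]
  refine sum_congr rfl fun t ht => ?_
  rw [HasAntidiagonal.mem_antidiagonal] at hab
  rw [Finset.Nat.mem_antidiagonalTuple] at ht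
  rw [Nat.multinomial_univ_fin_cons, ht, hab, Fin.prod_univ_succ]
  simp only [Fin.cons_zero, Fin.cons_succ, Fin.tail]
  push_cast
  ring

/-- Abel's multinomial recurrence (stated with `m + 1 ≥ 1` variables, the first
variable playing the role of `x_1`):
`A_n(x; p) = Σ_{s=0}^n C(n,s)·s!·(x_1+s)·A_{n-s}(x_1+s, x_2,…,x_m; p_1−1, p_2,…,p_m)`. -/
theorem abel_multinomial_recurrence (m n : ℕ)
    (x : Fin (m + 1) → ℝ) (hx : ∀ j, 0 < x j) (p : Fin (m + 1) → ℤ) :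
    abelA (m + 1) n x p =
      ∑ s ∈ Finset.range (n + 1),
        (n.choose s : ℝ) * (s.factorial : ℝ) * (x 0 + s) *
          abelA (m + 1) (n - s) (Function.update x 0 (x 0 + s))
            (Function.update p 0 (p 0 - 1)) := by
  rw [abelA_succ, abel_convolution_recurrence (x 0) (p 0)
    (fun d => abelA m d (Fin.tail x) (Fin.tail p)) n
    fun a _ => (add_pos_of_pos_of_nonneg (hx 0) a.cast_nonneg).ne']
  refine sum_congr rfl fun s _ => ?_
  rw [abelA_succ]
  simp only [Function.update_self, Fin.tail_update_zero]
end

section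
/- For every real c with 0 < c < 1, the series Σ_{s=0}^{∞} ((c·e^{-c})^{s}/s!)·(s+1)^{s} converges and its sum equals e^{c}/(1−c). -/
/-!
Write `G(z) = ∑ aₙ zⁿ` with `aₙ = (n+1)ⁿ/n!`. Substituting `z = c e^{-c}` and expanding each
`e^{-cs}` turns `G(c e^{-c})` into a double series in `c`. Abel's identity
`∑_{k+l=n} (x+k)ᵏ/k! · (y-k)ˡ/l! = ∑_{j≤n} (x+y)ʲ/j!`, taken at `x = 1`, `y = 0`, shows that
its coefficient of `cⁿ` is `∑_{j≤n} 1/j!`, which is the coefficient of the Cauchy product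
`e^c · 1/(1-c)`. The rearrangement is justified only for small `c`, where the double series
converges absolutely; since `aₙ ≤ e^{n+1}` the series `G` has radius at least `1/e`, and
`c e^{-c} < 1/e` for all `c ≠ 1`, so both sides are real analytic in `c` on `(0, 1)` and the
identity extends by analytic continuation.
-/

open Finset Real Nat

theorem sum_range_neg_one_pow_mul_choose_mul_add_pow {R : Type*} [CommRing R] (n : ℕ) (x : R) :
    ∑ k ∈ range (n + 1), (-1) ^ (n - k) * (n.choose k : R) * (x + k) ^ n = n ! := by
  have h := fwdDiff_iter_eq_sum_shift (1 : R) (fun r => r ^ n) n x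
  rw [fwdDiff_iter_eq_factorial] at h
  simpa [zsmul_eq_mul] using h.symm

theorem HasSum.sum_antidiagonal {α A : Type*} [AddCommMonoid α] [TopologicalSpace α]
    [ContinuousAdd α] [RegularSpace α] [AddMonoid A] [HasAntidiagonal A] {f : A × A → α}
    {a : α} (hf : HasSum f a) : HasSum (fun n => ∑ p ∈ antidiagonal n, f p) a :=
  (HasAntidiagonal.sigmaAntidiagonalEquivProd.hasSum_iff.2 hf).sigma fun n =>
    (sum_coe_sort (antidiagonal n) f) ▸ hasSum_fintype _

theorem hasSum_pow_div_factorial_exp (x : ℝ) : HasSum (fun m => x ^ m / m !) (exp x) := by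
  rw [exp_eq_exp_ℝ]
  exact NormedSpace.expSeries_div_hasSum_exp x

theorem hasDerivAt_pow_succ_div_factorial_succ (j : ℕ) (t : ℝ) :
    HasDerivAt (fun t : ℝ => t ^ (j + 1) / (j + 1)!) (t ^ j / j !) t := by
  refine ((hasDerivAt_pow (j + 1) t).div_const ((j + 1)! : ℝ)).congr_deriv ?_
  rw [factorial_succ]
  push_cast
  field_simp

theorem mul_exp_neg_lt_exp_neg_one {c : ℝ} (hc : c ≠ 1) : c * exp (-c) < exp (-1) := by
  have h : c < exp (c - 1) := by linarith [add_one_lt_exp (sub_ne_zero.mpr hc)]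
  calc c * exp (-c) < exp (c - 1) * exp (-c) := by gcongr
    _ = exp (-1) := by rw [← exp_add]; ring_nf

noncomputable def abelSum (n : ℕ) (x y : ℝ) : ℝ :=
  ∑ p ∈ antidiagonal n, (x + p.1) ^ p.1 / p.1 ! * ((y - p.1) ^ p.2 / p.2 !)

noncomputable def expPartialSum (n : ℕ) (t : ℝ) : ℝ :=
  ∑ j ∈ range (n + 1), t ^ j / j !

theorem hasDerivAt_expPartialSum_succ (n : ℕ) (t : ℝ) :
    HasDerivAt (expPartialSum (n + 1)) (expPartialSum n t) t := by
  have h := HasDerivAt.fun_sum (u := range (n + 1))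
    fun j _ => hasDerivAt_pow_succ_div_factorial_succ j t
  unfold expPartialSum
  simp_rw [sum_range_succ' _ (n + 1)]
  simpa using h.add_const (t ^ 0 / (0 ! : ℝ))

theorem hasDerivAt_abelSum_succ (n : ℕ) (x y : ℝ) :
    HasDerivAt (abelSum (n + 1) x) (abelSum n x y) y := by
  have h := HasDerivAt.fun_sum (u := antidiagonal n) fun p _ =>
    ((hasDerivAt_pow_succ_div_factorial_succ p.2 (y - p.1)).comp_sub_const y (p.1 : ℝ)).const_mul
      ((x + p.1) ^ p.1 / p.1 !)
  unfold abelSum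
  simp_rw [Nat.sum_antidiagonal_succ']
  simpa using h

theorem expPartialSum_zero_right (n : ℕ) : expPartialSum n 0 = 1 := by
  simp [expPartialSum, sum_range_succ']

theorem abelSum_neg (n : ℕ) (x : ℝ) : abelSum n x (-x) = 1 := by
  have hn : (n ! : ℝ) ≠ 0 := by positivity
  have h : ∑ k ∈ range (n + 1), (-1) ^ (n - k) * (n.choose k : ℝ) * (x + k) ^ n =
      n ! * abelSum n x (-x) := by
    rw [abelSum, Nat.sum_antidiagonal_eq_sum_range_succ_mk, mul_sum]
    refine sum_congr rfl fun k hk => ?_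
    have hkn : k ≤ n := Nat.lt_succ_iff.mp (mem_range.mp hk)
    rw [Nat.cast_choose ℝ hkn, show -x - k = -1 * (x + k) by ring, mul_pow,
      ← pow_mul_pow_sub (x + k) hkn]
    field_simp
  rw [sum_range_neg_one_pow_mul_choose_mul_add_pow] at h
  exact (mul_eq_left₀ hn).mp h.symm

-- Both sides have `y`-derivative given by the case `n - 1`, and they agree at `y = -x`.
theorem abelSum_eq_expPartialSum (n : ℕ) (x y : ℝ) :
    abelSum n x y = expPartialSum n (x + y) := by
  induction n generalizing y with
  | zero => simp [abelSum, expPartialSum]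
  | succ n ih =>
    have hderiv (z : ℝ) :
        HasDerivAt (fun y => abelSum (n + 1) x y - expPartialSum (n + 1) (x + y)) 0 z := by
      simpa [ih] using (hasDerivAt_abelSum_succ n x z).fun_sub
        ((hasDerivAt_expPartialSum_succ n (x + z)).comp_const_add x z)
    have hconst := is_const_of_deriv_eq_zero (fun z => (hderiv z).differentiableAt)
      (fun z => (hderiv z).deriv) y (-x)
    simpa [abelSum_neg, expPartialSum_zero_right, sub_eq_zero] using hconst

noncomputable def treeGCoeff (n : ℕ) : ℝ := ((n : ℝ) + 1) ^ n / n !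

theorem treeGCoeff_nonneg (n : ℕ) : 0 ≤ treeGCoeff n := by
  unfold treeGCoeff; positivity

theorem treeGCoeff_le_exp (n : ℕ) : treeGCoeff n ≤ exp (n + 1) := by
  have h := pow_div_factorial_le_exp (x := (n : ℝ) + 1) (by positivity) (n + 1)
  rwa [factorial_succ, cast_mul, pow_succ, cast_succ, mul_comm ((n : ℝ) + 1),
    mul_div_mul_right _ _ (by positivity)] at h

theorem summable_treeGCoeff_mul_pow {r : ℝ} (hr : 0 ≤ r) (hre : r * exp 1 < 1) :
    Summable fun n => treeGCoeff n * r ^ n := by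
  refine Summable.of_nonneg_of_le (fun n => mul_nonneg (treeGCoeff_nonneg n) (by positivity))
    (fun n => ?_) ((summable_geometric_of_lt_one (by positivity) hre).mul_left (exp 1))
  calc treeGCoeff n * r ^ n ≤ exp (n + 1) * r ^ n := by
        gcongr; exact treeGCoeff_le_exp n
    _ = exp 1 * (r * exp 1) ^ n := by
        rw [exp_add, mul_pow, exp_one_pow]; ring

theorem sum_antidiagonal_treeGCoeff_mul_eq (c : ℝ) (n : ℕ) :
    ∑ p ∈ antidiagonal n, treeGCoeff p.1 * c ^ p.1 * ((-(c * p.1)) ^ p.2 / p.2 !) =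
      ∑ p ∈ antidiagonal n, c ^ p.1 / p.1 ! * c ^ p.2 := by
  have hlhs : ∑ p ∈ antidiagonal n, treeGCoeff p.1 * c ^ p.1 * ((-(c * p.1)) ^ p.2 / p.2 !) =
      c ^ n * abelSum n 1 0 := by
    rw [abelSum, mul_sum]
    refine sum_congr rfl fun p hp => ?_
    rw [← mem_antidiagonal.mp hp, treeGCoeff]
    ring
  have hrhs : ∑ p ∈ antidiagonal n, c ^ p.1 / p.1 ! * c ^ p.2 = c ^ n * expPartialSum n 1 := by
    rw [expPartialSum, Nat.sum_antidiagonal_eq_sum_range_succ_mk, mul_sum]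
    refine sum_congr rfl fun k hk => ?_
    rw [← pow_mul_pow_sub c (Nat.lt_succ_iff.mp (mem_range.mp hk))]
    ring
  rw [hlhs, hrhs, abelSum_eq_expPartialSum, add_zero]

theorem hasSum_treeGCoeff_mul_pow_of_mul_exp_lt_one {c : ℝ} (hc : 0 ≤ c)
    (hsmall : c * exp (c + 1) < 1) :
    HasSum (fun n => treeGCoeff n * (c * exp (-c)) ^ n) (exp c / (1 - c)) := by
  have hc1 : c < 1 := (le_mul_of_one_le_right hc (one_le_exp (by linarith))).trans_lt hsmall
  set f : ℕ × ℕ → ℝ := fun p => treeGCoeff p.1 * c ^ p.1 * ((-(c * p.1)) ^ p.2 / p.2 !)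
  have hrow (s : ℕ) : HasSum (fun m => f (s, m)) (treeGCoeff s * (c * exp (-c)) ^ s) := by
    rw [mul_pow, ← exp_nat_mul, ← mul_assoc, mul_comm (s : ℝ), neg_mul]
    exact (hasSum_pow_div_factorial_exp _).mul_left _
  have hrow_abs (s : ℕ) : HasSum (fun m => |f (s, m)|) (treeGCoeff s * (c * exp c) ^ s) := by
    rw [mul_pow, ← exp_nat_mul, ← mul_assoc, mul_comm (s : ℝ)]
    refine ((hasSum_pow_div_factorial_exp _).mul_left _).congr_fun fun m => ?_
    rw [abs_mul, abs_div, abs_pow, abs_neg, abs_of_nonneg (by positivity : 0 ≤ c * s),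
      abs_of_nonneg (mul_nonneg (treeGCoeff_nonneg s) (by positivity)), Nat.abs_cast]
  have hf : Summable f := by
    refine Summable.of_abs ((summable_prod_of_nonneg fun _ => abs_nonneg _).2
      ⟨fun s => (hrow_abs s).summable, ?_⟩)
    simp_rw [(hrow_abs _).tsum_eq]
    exact summable_treeGCoeff_mul_pow (by positivity) (by rwa [mul_assoc, ← exp_add])
  have hcauchy : HasSum (fun n => ∑ p ∈ antidiagonal n, c ^ p.1 / p.1 ! * c ^ p.2)
      (exp c / (1 - c)) := by
    have hexp := hasSum_pow_div_factorial_exp c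
    have hgeom := hasSum_geometric_of_lt_one hc hc1
    have hprod : Summable fun p : ℕ × ℕ => c ^ p.1 / p.1 ! * c ^ p.2 := by
      refine summable_mul_of_summable_norm (f := fun j : ℕ => c ^ j / j !)
        (g := fun k : ℕ => c ^ k) ?_ ?_
      · simpa [abs_of_nonneg hc] using hexp.summable
      · simpa [abs_of_nonneg hc] using hgeom.summable
    rw [div_eq_mul_inv]
    exact (hexp.mul hgeom hprod).sum_antidiagonal
  have hsum : ∑' p, f p = exp c / (1 - c) :=
    hf.hasSum.sum_antidiagonal.unique
      (hcauchy.congr_fun fun n => sum_antidiagonal_treeGCoeff_mul_eq c n)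
  exact hsum ▸ hf.hasSum.prod_fiberwise hrow

noncomputable def treeGSeries : FormalMultilinearSeries ℝ ℝ ℝ :=
  FormalMultilinearSeries.ofScalars ℝ treeGCoeff

theorem exp_neg_one_le_radius_treeGSeries :
    ENNReal.ofReal (exp (-1)) ≤ treeGSeries.radius := by
  refine ENNReal.le_of_forall_nnreal_lt fun r hr => treeGSeries.le_radius_of_summable ?_
  have hre : (r : ℝ) * exp 1 < 1 := by
    calc (r : ℝ) * exp 1 < exp (-1) * exp 1 := by gcongr; exact ENNReal.coe_lt_ofReal.mp hr
      _ = 1 := by rw [← exp_add, neg_add_cancel, exp_zero]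
  refine (summable_treeGCoeff_mul_pow r.coe_nonneg hre).congr fun n => ?_
  rw [treeGSeries, FormalMultilinearSeries.ofScalars_norm, norm_of_nonneg (treeGCoeff_nonneg n)]

theorem mul_exp_neg_mem_eball_treeGSeries {c : ℝ} (hc : 0 ≤ c) (hc1 : c ≠ 1) :
    c * exp (-c) ∈ Metric.eball (0 : ℝ) treeGSeries.radius := by
  rw [Metric.mem_eball, edist_zero_right, ← ofReal_norm, norm_of_nonneg (by positivity)]
  exact ((ENNReal.ofReal_lt_ofReal_iff (exp_pos _)).2 (mul_exp_neg_lt_exp_neg_one hc1)).trans_le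
    exp_neg_one_le_radius_treeGSeries

theorem treeGSeries_hasSum_mul_exp_neg {c : ℝ} (hc : 0 ≤ c) (hc1 : c ≠ 1) :
    HasSum (fun n => treeGCoeff n * (c * exp (-c)) ^ n) (treeGSeries.sum (c * exp (-c))) :=
  (treeGSeries.hasSum (mul_exp_neg_mem_eball_treeGSeries hc hc1)).congr_fun fun n => by
    rw [treeGSeries, FormalMultilinearSeries.ofScalars_apply_eq, smul_eq_mul]

theorem treeGSeries_sum_mul_exp_neg {c : ℝ} (hc : 0 < c) (hc1 : c < 1) :
    treeGSeries.sum (c * exp (-c)) = exp c / (1 - c) := by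
  have hpos : 0 < treeGSeries.radius :=
    (ENNReal.ofReal_pos.2 (exp_pos _)).trans_le exp_neg_one_le_radius_treeGSeries
  have hball := treeGSeries.hasFPowerSeriesOnBall hpos
  refine AnalyticOnNhd.eqOn_of_preconnected_of_eventuallyEq (𝕜 := ℝ) (z₀ := 1 / 16)
    (f := fun x => treeGSeries.sum (x * exp (-x))) (g := fun x => exp x / (1 - x))
    (fun x hx => ?_) (fun x hx => ?_) isPreconnected_Ioo (by norm_num) ?_ ⟨hc, hc1⟩
  · exact AnalyticAt.comp (f := fun y => y * exp (-y))
      (hball.analyticAt_of_mem (mul_exp_neg_mem_eball_treeGSeries hx.1.le hx.2.ne))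
      (analyticAt_id.mul (analyticAt_rexp.comp analyticAt_id.neg))
  · exact analyticAt_rexp.div (analyticAt_const.sub analyticAt_id) (sub_ne_zero.mpr hx.2.ne')
  · filter_upwards [Ioo_mem_nhds (by norm_num : (0 : ℝ) < 1 / 16)
      (by norm_num : (1 / 16 : ℝ) < 1 / 8)] with x hx
    have hsmall : x * exp (x + 1) < 1 := by
      have h8 : exp (x + 1) < 8 := by
        calc exp (x + 1) < exp 1 * exp 1 := by rw [← exp_add]; gcongr; linarith [hx.2]
          _ < 8 := by nlinarith [exp_one_lt_d9, exp_pos 1]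
      nlinarith [hx.1, hx.2]
    exact (treeGSeries_hasSum_mul_exp_neg hx.1.le (by linarith [hx.2])).unique
      (hasSum_treeGCoeff_mul_pow_of_mul_exp_lt_one hx.1.le hsmall)

/-- For every real `c` with `0 < c < 1`, the series `Σ_{s=0}^∞ ((c·e^{-c})^s/s!)·(s+1)^s`
converges, with sum `e^c/(1−c)`. -/
theorem tree_function_G_value (c : ℝ) (hc : 0 < c) (hc1 : c < 1) :
    HasSum (fun s : ℕ => (c * Real.exp (-c)) ^ s / (s.factorial : ℝ) * ((s : ℝ) + 1) ^ s)
      (Real.exp c / (1 - c)) := by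
  have h := treeGSeries_hasSum_mul_exp_neg hc.le hc1.ne
  rw [treeGSeries_sum_mul_exp_neg hc hc1] at h
  exact h.congr_fun fun s => by rw [treeGCoeff]; ring
end
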